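/- In a geodesic δ-hyperbolic space, let σ be a geodesic segment, a a point not on σ, and c an orthogonal projection of a on σ. Let b be any point of σ, and let d be an orthogonal projection of b onto the geodesic segment ac. Then |c - d| ≤ 2δ. -/

import Mathlib

/-! Put `t = |a - d|`, `L = |a - c|` (so `|c - d| = L - t`) and let `p` be the point
of a geodesic `ab` with `|a - p| = (t + L) / 2`, which exists since `L ≤ |a - b|`. Every point of the
opposite sides `bc ⊆ σ` and `ac` is at distance at least `(L - t) / 2` from `p`: a point `e` of `σ`
has `|a - e| ≥ L` because `c` is a projection of `a`, and a point `e` of `ac` has `|b - e| ≥ |b - d|`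
because `d` is a projection of `b`, while `|a - b| ≤ t + |b - d|`. Thinness of the triangle `abc`
at `p` then gives `(L - t) / 2 ≤ δ`. -/

open Metric Set

/-- `s` is a geodesic segment from `x` to `y`. -/
def IsGeodSeg {X : Type*} [MetricSpace X] (x y : X) (s : Set X) : Prop :=
  ∃ f : ℝ → X, f 0 = x ∧ f (dist x y) = y ∧
    (∀ a ∈ Icc (0:ℝ) (dist x y), ∀ b ∈ Icc (0:ℝ) (dist x y), dist (f a) (f b) = |a - b|) ∧
    s = f '' Icc (0:ℝ) (dist x y)

/-- A geodesic metric space: any two points are joined by a geodesic segment. -/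
def GeodesicSpace (X : Type*) [MetricSpace X] : Prop :=
  ∀ x y : X, ∃ s : Set X, IsGeodSeg x y s

/-- δ-hyperbolicity via δ-thin geodesic triangles. -/
def ThinTriangles (X : Type*) [MetricSpace X] (δ : ℝ) : Prop :=
  ∀ (x y z : X) (sxy syz sxz : Set X),
    IsGeodSeg x y sxy → IsGeodSeg y z syz → IsGeodSeg x z sxz →
    ∀ p ∈ sxy, infDist p (syz ∪ sxz) ≤ δ

section Geodesic

variable {X : Type*} [MetricSpace X]

lemma dist_apply_of_forall_dist_eq_abs_sub {f : ℝ → X} {L : ℝ}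
    (hf : ∀ a ∈ Icc (0:ℝ) L, ∀ b ∈ Icc (0:ℝ) L, dist (f a) (f b) = |a - b|)
    {r : ℝ} (hr : r ∈ Icc 0 L) :
    dist (f 0) (f r) = r ∧ dist (f r) (f L) = L - r := by
  have hL : (0:ℝ) ≤ L := hr.1.trans hr.2
  constructor
  · rw [hf 0 ⟨le_rfl, hL⟩ r hr, zero_sub, abs_neg, abs_of_nonneg hr.1]
  · rw [hf r hr L ⟨hL, le_rfl⟩, abs_of_nonpos (by linarith [hr.2]), neg_sub]

namespace IsGeodSeg

variable {x y : X} {s : Set X}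

lemma dist_add_dist (h : IsGeodSeg x y s) {p : X} (hp : p ∈ s) :
    dist x p + dist p y = dist x y := by
  obtain ⟨f, h0, hL, hf, rfl⟩ := h
  obtain ⟨r, hr, rfl⟩ := hp
  obtain ⟨h1, h2⟩ := dist_apply_of_forall_dist_eq_abs_sub hf hr
  rw [h0] at h1
  rw [hL] at h2
  linarith

lemma exists_dist_eq (h : IsGeodSeg x y s) {t : ℝ} (ht : t ∈ Icc 0 (dist x y)) :
    ∃ p ∈ s, dist x p = t := by
  obtain ⟨f, h0, -, hf, rfl⟩ := h
  exact ⟨f t, mem_image_of_mem f ht, h0 ▸ (dist_apply_of_forall_dist_eq_abs_sub hf ht).1⟩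

lemma symm (h : IsGeodSeg x y s) : IsGeodSeg y x s := by
  obtain ⟨f, h0, hL, hf, rfl⟩ := h
  unfold IsGeodSeg
  rw [dist_comm y x]
  refine ⟨fun r => f (dist x y - r), by simpa using hL, by simpa using h0, ?_, ?_⟩
  · intro a ha b hb
    rw [hf _ ⟨by linarith [ha.2], by linarith [ha.1]⟩ _ ⟨by linarith [hb.2], by linarith [hb.1]⟩,
      abs_sub_comm]
    ring_nf
  · rw [show (fun r => f (dist x y - r)) = f ∘ (dist x y - ·) from rfl, image_comp]
    simp

lemma exists_subset (h : IsGeodSeg x y s) {b c : X} (hb : b ∈ s) (hc : c ∈ s) :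
    ∃ t ⊆ s, IsGeodSeg b c t := by
  obtain ⟨f, -, -, hf, rfl⟩ := h
  obtain ⟨p, hp, rfl⟩ := hb
  obtain ⟨q, hq, rfl⟩ := hc
  wlog hpq : p ≤ q generalizing p q
  · obtain ⟨t, hts, ht⟩ := this q hq p hp (le_of_not_ge hpq)
    exact ⟨t, hts, ht.symm⟩
  have hD : dist (f p) (f q) = q - p := by
    rw [hf p hp q hq, abs_of_nonpos (by linarith), neg_sub]
  refine ⟨(fun r => f (p + r)) '' Icc 0 (q - p), ?_,
    fun r => f (p + r), by simp, by rw [hD]; ring_nf, ?_, by rw [hD]⟩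
  · rintro _ ⟨r, hr, rfl⟩
    exact mem_image_of_mem f ⟨by linarith [hr.1, hp.1], by linarith [hr.2, hq.2]⟩
  · intro a ha b hb
    rw [hD] at ha hb
    rw [hf _ ⟨by linarith [ha.1, hp.1], by linarith [ha.2, hq.2]⟩
      _ ⟨by linarith [hb.1, hp.1], by linarith [hb.2, hq.2]⟩]
    ring_nf

end IsGeodSeg

end Geodesic

theorem lemma3_projection_back_general {X : Type*} [MetricSpace X] (δ : ℝ)
    (hgeo : GeodesicSpace X) (hthin : ThinTriangles X δ)
    (x y a b c d : X) (σ τ : Set X)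
    (hσ : IsGeodSeg x y σ)
    (hc : c ∈ σ) (hcP : dist a c = infDist a σ)
    (hb : b ∈ σ)
    (hτ : IsGeodSeg a c τ)
    (hd : d ∈ τ) (hdP : dist b d = infDist b τ) :
    dist c d ≤ 2 * δ := by
  obtain ⟨sab, hab⟩ := hgeo a b
  obtain ⟨sbc, hsbc, hbc⟩ := hσ.exists_subset hb hc
  have hadc : dist a d + dist d c = dist a c := hτ.dist_add_dist hd
  have hac_le : dist a c ≤ dist a b := hcP ▸ infDist_le_dist_of_mem hb
  obtain ⟨p, hp, hap⟩ := hab.exists_dist_eq (t := (dist a d + dist a c) / 2)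
    ⟨by positivity, by linarith [dist_nonneg (x := d) (y := c)]⟩
  have hpb : dist a p + dist p b = dist a b := hab.dist_add_dist hp
  have hfar : (dist a c - dist a d) / 2 ≤ infDist p (sbc ∪ τ) := by
    refine (le_infDist ⟨d, Or.inr hd⟩).2 fun e he => ?_
    rcases he with he | he
    · have hce : dist a c ≤ dist a e := hcP ▸ infDist_le_dist_of_mem (hsbc he)
      linarith [dist_triangle a p e]
    · have hde : dist b d ≤ dist b e := hdP ▸ infDist_le_dist_of_mem he
      linarith [dist_triangle b p e, dist_triangle_right a b d, dist_comm b p]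
  have hthin_p := hthin a b c sab sbc τ hab hbc hτ p hp
  rw [dist_comm]
  linarith

theorem lemma3_projection_back {X : Type*} [MetricSpace X] (δ : ℝ) (hδ : 0 ≤ δ)
    (hgeo : GeodesicSpace X) (hthin : ThinTriangles X δ)
    (x y a b c d : X) (σ τ : Set X)
    (hσ : IsGeodSeg x y σ) (haσ : a ∉ σ)
    (hc : c ∈ σ) (hcP : dist a c = infDist a σ)
    (hb : b ∈ σ)
    (hτ : IsGeodSeg a c τ)
    (hd : d ∈ τ) (hdP : dist b d = infDist b τ) :
    dist c d ≤ 2 * δ :=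
  lemma3_projection_back_general δ hgeo hthin x y a b c d σ τ hσ hc hcP hb hτ hd hdP
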